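/- arXiv:1805.06672 — 2 statements merged into one kernel-verified Lean document; each statement's English description precedes it below -/
import Mathlib

section
/- Let k ≥ 1, let a_0, ..., a_{k+1} ∈ ℝ satisfy ∑_{j=0}^{k+1} a_j 2^{jl} = 0 for all l = 0, ..., k, and let Ω_j = B(0, 2^{j+1}) \ B(0, 2^j) ⊂ ℝ^n. Then for every polynomial P : ℝ^n → ℝ of degree at most k, one has ∑_{j=0}^{k+1} a_j · (average of P over Ω_j) = 0. -/
open Finset MeasureTheory Metric Pointwise

/-!
The dilation `x ↦ 2^j x` maps `Ω_0` onto `Ω_j` and preserves averages, while it multiplies a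
homogeneous polynomial of degree `l` by `2^(jl)`. Splitting `P` into homogeneous components, the
average of `P` over `Ω_j` is therefore `∑_{l ≤ k} 2^(jl) c_l` with `c_l` independent of `j`, and
the hypotheses on `a` annihilate each term.
-/

theorem MvPolynomial.IsHomogeneous.eval_smul {R σ : Type*} [CommSemiring R]
    {φ : MvPolynomial σ R} {l : ℕ} (hφ : φ.IsHomogeneous l) (c : R) (x : σ → R) :
    MvPolynomial.eval (c • x) φ = c ^ l * MvPolynomial.eval x φ := by
  rw [MvPolynomial.eval_eq, MvPolynomial.eval_eq, Finset.mul_sum]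
  refine Finset.sum_congr rfl fun d hd => ?_
  have hdeg : ∑ i ∈ d.support, d i = l := by
    simpa [Finsupp.weight_apply, Finsupp.sum] using hφ (MvPolynomial.mem_support_iff.mp hd)
  simp only [Pi.smul_apply, smul_eq_mul, mul_pow, Finset.prod_mul_distrib,
    Finset.prod_pow_eq_pow_sum, hdeg]
  ring

namespace MeasureTheory

section Average

variable {α E : Type*} [MeasurableSpace α] {μ : Measure α} [NormedAddCommGroup E]
  [NormedSpace ℝ E]

theorem average_const_smul (c : ℝ) (f : α → E) : ⨍ x, c • f x ∂μ = c • ⨍ x, f x ∂μ := by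
  rw [average_eq, average_eq, integral_smul, smul_comm]

theorem average_finset_sum {ι : Type*} (t : Finset ι) {f : ι → α → E}
    (hf : ∀ i ∈ t, Integrable (f i) μ) : ⨍ x, ∑ i ∈ t, f i x ∂μ = ∑ i ∈ t, ⨍ x, f i x ∂μ := by
  simp only [average_eq, integral_finsetSum t hf, Finset.smul_sum]

end Average

theorem Measure.setAverage_smul_set {E F : Type*} [NormedAddCommGroup E]
    [NormedSpace ℝ E] [MeasurableSpace E] [BorelSpace E] [FiniteDimensional ℝ E]
    (μ : Measure E) [μ.IsAddHaarMeasure] [NormedAddCommGroup F] [NormedSpace ℝ F]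
    (f : E → F) (s : Set E) {R : ℝ} (hR : R ≠ 0) :
    ⨍ x in R • s, f x ∂μ = ⨍ x in s, f (R • x) ∂μ := by
  rw [setAverage_eq, setAverage_eq, setIntegral_comp_smul μ f s hR, measureReal_def,
    measureReal_def, Measure.addHaar_smul, ENNReal.toReal_mul,
    ENNReal.toReal_ofReal (by positivity), smul_smul, abs_inv, abs_pow, mul_inv, mul_comm]

end MeasureTheory

section DyadicAnnulus

variable (E : Type*) [NormedAddCommGroup E]

def dyadicAnnulus (j : ℕ) : Set E :=
  ball (0 : E) (2 ^ (j + 1)) \ ball (0 : E) (2 ^ j)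

theorem dyadicAnnulus_eq_smul [NormedSpace ℝ E] (j : ℕ) :
    dyadicAnnulus E j = (2 : ℝ) ^ j • dyadicAnnulus E 0 := by
  have h2 : (2 : ℝ) ^ j ≠ 0 := by positivity
  rw [dyadicAnnulus, dyadicAnnulus, Set.smul_set_sdiff₀ h2, _root_.smul_ball h2,
    _root_.smul_ball h2]
  simp [pow_succ]

theorem Continuous.integrableOn_dyadicAnnulus [MeasurableSpace E] [ProperSpace E] {F : Type*}
    [NormedAddCommGroup F] {μ : Measure E} [IsFiniteMeasureOnCompacts μ]
    [OpensMeasurableSpace E] {f : E → F} (hf : Continuous f) (j : ℕ) :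
    IntegrableOn f (dyadicAnnulus E j) μ :=
  (hf.locallyIntegrable.integrableOn_isCompact (isCompact_closedBall 0 _)).mono_set
    (Set.sdiff_subset.trans ball_subset_closedBall)

variable {E} [NormedSpace ℝ E] [MeasurableSpace E] [BorelSpace E] [FiniteDimensional ℝ E]

theorem setAverage_dyadicAnnulus_of_homogeneous (μ : MeasureTheory.Measure E)
    [μ.IsAddHaarMeasure] {F : Type*} [NormedAddCommGroup F] [NormedSpace ℝ F] {f : E → F}
    {l : ℕ} (hf : ∀ (c : ℝ) x, f (c • x) = c ^ l • f x) (j : ℕ) :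
    ⨍ x in dyadicAnnulus E j, f x ∂μ = (2 : ℝ) ^ (j * l) • ⨍ x in dyadicAnnulus E 0, f x ∂μ := by
  rw [dyadicAnnulus_eq_smul, μ.setAverage_smul_set f _ (by positivity)]
  simp_rw [hf, pow_mul]
  exact average_const_smul _ _

end DyadicAnnulus

theorem exists_setAverage_dyadicAnnulus_eval_eq_sum {ι : Type*} [Fintype ι]
    (μ : Measure (EuclideanSpace ℝ ι)) [μ.IsAddHaarMeasure] (P : MvPolynomial ι ℝ) :
    ∃ c : ℕ → ℝ, ∀ j, ⨍ x in dyadicAnnulus (EuclideanSpace ℝ ι) j,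
      MvPolynomial.eval (fun i => x i) P ∂μ =
        ∑ l ∈ range (P.totalDegree + 1), (2 : ℝ) ^ (j * l) * c l := by
  refine ⟨fun l => ⨍ x in dyadicAnnulus _ 0,
    MvPolynomial.eval (fun i => x i) (MvPolynomial.homogeneousComponent l P) ∂μ, fun j => ?_⟩
  conv_lhs => rw [← P.sum_homogeneousComponent]
  simp only [map_sum]
  rw [average_finset_sum]
  · refine Finset.sum_congr rfl fun l _ => setAverage_dyadicAnnulus_of_homogeneous μ
      (fun c x => ?_) j
    exact (MvPolynomial.homogeneousComponent_isHomogeneous l P).eval_smul c _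
  · intro l _
    exact (MvPolynomial.continuous_eval _).comp (PiLp.continuous_ofLp 2 _)
      |>.integrableOn_dyadicAnnulus _ j

theorem vandermonde_annihilates_polynomial_averages_general (n k : ℕ)
    (a : ℕ → ℝ)
    (hsys : ∀ l : ℕ, l ≤ k → ∑ j ∈ Finset.range (k + 2), a j * 2 ^ (j * l) = 0)
    (P : MvPolynomial (Fin n) ℝ) (hP : P.totalDegree ≤ k) :
    ∑ j ∈ Finset.range (k + 2),
        a j * ⨍ x in (ball (0 : EuclideanSpace ℝ (Fin n)) (2 ^ (j + 1))
            \ ball (0 : EuclideanSpace ℝ (Fin n)) (2 ^ j)),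
          MvPolynomial.eval (fun i => x i) P ∂volume = 0 := by
  obtain ⟨c, hc⟩ := exists_setAverage_dyadicAnnulus_eval_eq_sum volume P
  simp_rw [← dyadicAnnulus.eq_1, hc, Finset.mul_sum]
  rw [Finset.sum_comm]
  refine Finset.sum_eq_zero fun l hl => ?_
  simp_rw [← mul_assoc, ← Finset.sum_mul]
  rw [hsys l ((Nat.lt_succ_iff.mp (mem_range.mp hl)).trans hP), zero_mul]

/-- The Vandermonde coefficients annihilate the annular averages of any
polynomial of total degree at most `k`. -/
theorem vandermonde_annihilates_polynomial_averages (n k : ℕ) (hn : 1 ≤ n) (hk : 1 ≤ k)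
    (a : ℕ → ℝ)
    (hsys : ∀ l : ℕ, l ≤ k → ∑ j ∈ Finset.range (k + 2), a j * 2 ^ (j * l) = 0)
    (P : MvPolynomial (Fin n) ℝ) (hP : P.totalDegree ≤ k) :
    ∑ j ∈ Finset.range (k + 2),
        a j * ⨍ x in (ball (0 : EuclideanSpace ℝ (Fin n)) (2 ^ (j + 1))
            \ ball (0 : EuclideanSpace ℝ (Fin n)) (2 ^ j)),
          MvPolynomial.eval (fun i => x i) P ∂volume = 0 :=
  vandermonde_annihilates_polynomial_averages_general n k a hsys P hP
end

section
/- Let n ≥ 1, η ∈ (0,1), and α ∈ (0,n). There exists a constant C = C(n, η, α) > 0 such that for every f ∈ Ċ^η(ℝ^n) ∩ BMO(ℝ^n), ‖f‖_{L^∞} ≤ C + C‖f‖_{BMO}(1 + log⁺[ sup_{z∈ℝ^n} ∫_{ℝ^n} |f(y)|/(|z-y|+1)^α dy + ‖f‖_{Ċ^η} ]). -/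
open MeasureTheory Metric Real

/-!
Fix `x` and compare `f x` with the averages of `f` over the balls `B(x, 2ᵏ r)`. Hölder continuity
gives `|f x - f_{B(x,r)}| ≤ H r^η`, each doubling of the radius moves the average by at most
`2ⁿ ‖f‖_BMO`, and on a large ball the weighted integral bound gives
`|f_{B(x,R)}| ≤ (R + 1)^α K / |B(x,R)| ≲ R^(α-n) K`. With `r = 2⁻ᵐ` and `R = 2ᴹ` chosen so that
`H ≤ 2^(mη)` and `K ≤ 2^(M(n-α))`, both end terms are `O(1)`, while the number `m + M` of
doublings is `O(1 + log⁺(K + H))`.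
-/

section Average
variable {X : Type*} [MeasurableSpace X] {μ : Measure X} {s t : Set X} {f : X → ℝ}

theorem abs_setAverage_le_setAverage_abs (g : X → ℝ) : |⨍ x in s, g x ∂μ| ≤ ⨍ x in s, |g x| ∂μ :=
  norm_integral_le_integral_norm g

theorem abs_setAverage_sub_le (h0 : μ s ≠ 0) (hs : μ s ≠ ⊤) (hf : IntegrableOn f s μ) (c : ℝ) :
    |(⨍ x in s, f x ∂μ) - c| ≤ ⨍ x in s, |f x - c| ∂μ := by
  have hsub : ⨍ x in s, (f x - c) ∂μ = (⨍ x in s, f x ∂μ) - ⨍ _ in s, c ∂μ :=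
    integral_sub (Integrable.to_average hf) (integrable_const c)
  rw [setAverage_const h0 hs] at hsub
  exact hsub ▸ abs_setAverage_le_setAverage_abs _

theorem abs_setAverage_sub_le_of_forall (hs₀ : μ s ≠ 0) (hs : μ s ≠ ⊤) (hsm : MeasurableSet s)
    (hf : IntegrableOn f s μ) {c ε : ℝ} (h : ∀ y ∈ s, |f y - c| ≤ ε) :
    |(⨍ x in s, f x ∂μ) - c| ≤ ε :=
  (convex_closedBall c ε).set_average_mem isClosed_closedBall hs₀ hs
    (ae_restrict_of_forall_mem hsm h) hf

theorem abs_setAverage_sub_setAverage_le (hst : s ⊆ t) (hs₀ : μ s ≠ 0) (ht : μ t ≠ ⊤)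
    (hf : IntegrableOn f t μ) :
    |(⨍ x in s, f x ∂μ) - ⨍ x in t, f x ∂μ|
      ≤ μ.real t / μ.real s * ⨍ x in t, |f x - ⨍ y in t, f y ∂μ| ∂μ := by
  set c := ⨍ y in t, f y ∂μ
  have hs : μ s ≠ ⊤ := ne_top_of_le_ne_top ht (measure_mono hst)
  have hs_pos : 0 < μ.real s := ENNReal.toReal_pos hs₀ hs
  have ht_pos : 0 < μ.real t := hs_pos.trans_le (measureReal_mono hst ht)
  have hint : ∫ x in s, |f x - c| ∂μ ≤ ∫ x in t, |f x - c| ∂μ :=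
    setIntegral_mono_set ((hf.sub (integrableOn_const ht)).abs)
      (.of_forall fun _ => abs_nonneg _) hst.eventuallyLE
  calc |(⨍ x in s, f x ∂μ) - c| ≤ ⨍ x in s, |f x - c| ∂μ :=
        abs_setAverage_sub_le hs₀ hs (hf.mono_set hst) c
    _ = (μ.real s)⁻¹ * ∫ x in s, |f x - c| ∂μ := setAverage_eq _ _ _
    _ ≤ (μ.real s)⁻¹ * ∫ x in t, |f x - c| ∂μ := by gcongr
    _ = μ.real t / μ.real s * ⨍ x in t, |f x - c| ∂μ := by
        rw [setAverage_eq, smul_eq_mul]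
        field_simp

end Average

section Holder
variable {X : Type*} {f : X → ℝ} {H η : ℝ}

theorem continuous_of_abs_sub_le_mul_norm_rpow [SeminormedAddCommGroup X] (hη : 0 < η)
    (hf : ∀ x y, |f x - f y| ≤ H * ‖x - y‖ ^ η) : Continuous f := by
  refine continuous_iff_continuousAt.2 fun x => tendsto_iff_dist_tendsto_zero.2 ?_
  have hlim : Filter.Tendsto (fun y => H * ‖y - x‖ ^ η) (nhds x) (nhds 0) := by
    have := (((continuous_sub_right x).norm.rpow_const fun _ => Or.inr hη.le).const_mul H).tendsto x
    simpa [zero_rpow hη.ne'] using this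
  exact squeeze_zero (fun _ => dist_nonneg) (fun y => (Real.dist_eq _ _).trans_le (hf y x)) hlim

theorem nonneg_of_abs_sub_le_mul_norm_rpow [NormedAddCommGroup X] [Nontrivial X]
    (hf : ∀ x y, |f x - f y| ≤ H * ‖x - y‖ ^ η) : 0 ≤ H := by
  obtain ⟨y, hy⟩ := exists_ne (0 : X)
  have hpos : 0 < ‖y - 0‖ ^ η := rpow_pos_of_pos (norm_pos_iff.2 (by simpa using hy)) η
  exact nonneg_of_mul_nonneg_left ((abs_nonneg _).trans (hf y 0)) hpos

end Holder

theorem abs_setAverage_ball_le_of_weighted_integral_le {X : Type*} [SeminormedAddCommGroup X]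
    [MeasurableSpace X] [OpensMeasurableSpace X] (μ : Measure X) {f : X → ℝ} {α K : ℝ}
    (hα : 0 ≤ α) (x : X)
    (hInt : Integrable (fun y => |f y| / (‖x - y‖ + 1) ^ α) μ)
    (hK : ∫ y, |f y| / (‖x - y‖ + 1) ^ α ∂μ ≤ K) {R : ℝ} (hR : 0 ≤ R) :
    |⨍ y in ball x R, f y ∂μ| ≤ (R + 1) ^ α * K / μ.real (ball x R) := by
  have hpt : ∀ y ∈ ball x R, |f y| ≤ (R + 1) ^ α * (|f y| / (‖x - y‖ + 1) ^ α) := by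
    intro y hy
    have hxy : ‖x - y‖ + 1 ≤ R + 1 := by
      rw [← dist_eq_norm, dist_comm]; linarith [mem_ball.1 hy]
    rw [mul_div_left_comm]
    refine le_mul_of_one_le_right (abs_nonneg _) ((one_le_div (by positivity)).2 ?_)
    exact rpow_le_rpow (by positivity) hxy hα
  have hint : ∫ y in ball x R, |f y| ∂μ ≤ (R + 1) ^ α * K := by
    calc ∫ y in ball x R, |f y| ∂μ
        ≤ ∫ y in ball x R, (R + 1) ^ α * (|f y| / (‖x - y‖ + 1) ^ α) ∂μ :=
          integral_mono_of_nonneg (.of_forall fun _ => abs_nonneg _)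
            (hInt.const_mul _).integrableOn (ae_restrict_of_forall_mem measurableSet_ball hpt)
      _ ≤ (R + 1) ^ α * ∫ y, |f y| / (‖x - y‖ + 1) ^ α ∂μ := by
          rw [integral_const_mul]
          exact mul_le_mul_of_nonneg_left
            (setIntegral_le_integral hInt (.of_forall fun _ => by positivity)) (by positivity)
      _ ≤ (R + 1) ^ α * K := by gcongr
  calc |⨍ y in ball x R, f y ∂μ| ≤ ⨍ y in ball x R, |f y| ∂μ := abs_setAverage_le_setAverage_abs f
    _ = (μ.real (ball x R))⁻¹ * ∫ y in ball x R, |f y| ∂μ := setAverage_eq _ _ _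
    _ ≤ (μ.real (ball x R))⁻¹ * ((R + 1) ^ α * K) := by gcongr
    _ = (R + 1) ^ α * K / μ.real (ball x R) := inv_mul_eq_div _ _

theorem MeasureTheory.LocallyIntegrable.integrableOn_ball {X : Type*} [PseudoMetricSpace X]
    [ProperSpace X] [MeasurableSpace X] {μ : Measure X} {f : X → ℝ} (hf : LocallyIntegrable f μ)
    (x : X) (r : ℝ) : IntegrableOn f (ball x r) μ :=
  (hf.integrableOn_isCompact (isCompact_closedBall x r)).mono_set ball_subset_closedBall

theorem le_exp_max_log_zero (x : ℝ) : x ≤ exp (max (log x) 0) := by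
  rcases le_or_gt x 0 with hx | hx
  · exact hx.trans (exp_pos _).le
  · exact (exp_log hx).symm.le.trans (exp_le_exp.2 (le_max_left _ _))

theorem exists_nat_exp_le_two_pow_rpow {s L : ℝ} (hs : 0 < s) (hL : 0 ≤ L) :
    ∃ m : ℕ, exp L ≤ ((2 : ℝ) ^ m) ^ s ∧ (m : ℝ) ≤ L / (s * log 2) + 1 := by
  have hs2 : 0 < s * log 2 := mul_pos hs (log_pos one_lt_two)
  refine ⟨⌈L / (s * log 2)⌉₊, ?_, (Nat.ceil_lt_add_one (by positivity)).le⟩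
  have hceil := (div_le_iff₀ hs2).1 (Nat.le_ceil (L / (s * log 2)))
  rw [← rpow_natCast, ← rpow_mul zero_le_two, rpow_def_of_pos two_pos, exp_le_exp]
  linarith

theorem add_one_rpow_mul_div_le {R α K ω : ℝ} {d : ℕ} (hR : 1 ≤ R) (hα : 0 ≤ α) (hK0 : 0 ≤ K)
    (hK : K ≤ R ^ ((d : ℝ) - α)) (hω : 0 < ω) :
    (R + 1) ^ α * K / (R ^ d * ω) ≤ 2 ^ α / ω := by
  have hR0 : 0 < R := by linarith
  rw [div_le_div_iff₀ (by positivity) hω]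
  calc (R + 1) ^ α * K * ω ≤ (2 * R) ^ α * R ^ ((d : ℝ) - α) * ω := by gcongr; linarith
    _ = 2 ^ α * (R ^ d * ω) := by
      rw [mul_rpow zero_le_two hR0.le, mul_assoc (2 ^ α), ← rpow_add hR0, add_sub_cancel,
        rpow_natCast, mul_assoc]

section AddHaar
open Module
variable {E : Type*} [NormedAddCommGroup E] [NormedSpace ℝ E] [FiniteDimensional ℝ E]
  [MeasurableSpace E] [BorelSpace E] (μ : Measure E) [μ.IsAddHaarMeasure] {f : E → ℝ}

theorem addHaar_real_ball_of_pos (x : E) {r : ℝ} (hr : 0 < r) :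
    μ.real (ball x r) = r ^ finrank ℝ E * μ.real (ball 0 1) := by
  rw [measureReal_def, Measure.addHaar_ball_of_pos μ x hr, ENNReal.toReal_mul,
    ENNReal.toReal_ofReal (by positivity), measureReal_def]

theorem abs_sub_setAverage_ball_le_of_holder [Nontrivial E] {H η : ℝ} (hη : 0 < η)
    (hf : ∀ x y, |f x - f y| ≤ H * ‖x - y‖ ^ η) (x : E) {r : ℝ} (hr : 0 < r) :
    |f x - ⨍ y in ball x r, f y ∂μ| ≤ H * r ^ η := by
  rw [abs_sub_comm]
  refine abs_setAverage_sub_le_of_forall (measure_ball_pos μ x hr).ne' measure_ball_lt_top.ne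
    measurableSet_ball
    ((continuous_of_abs_sub_le_mul_norm_rpow hη hf).locallyIntegrable.integrableOn_ball x r)
    fun y hy => ?_
  exact (hf y x).trans (mul_le_mul_of_nonneg_left
    (rpow_le_rpow (norm_nonneg _) (mem_ball_iff_norm.1 hy).le hη.le)
    (nonneg_of_abs_sub_le_mul_norm_rpow hf))

theorem abs_setAverage_ball_sub_setAverage_ball_two_mul_le (hf : LocallyIntegrable f μ) {B : ℝ}
    (x : E) {r : ℝ} (hr : 0 < r)
    (hB : ⨍ y in ball x (2 * r), |f y - ⨍ z in ball x (2 * r), f z ∂μ| ∂μ ≤ B) :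
    |(⨍ y in ball x r, f y ∂μ) - ⨍ y in ball x (2 * r), f y ∂μ| ≤ 2 ^ finrank ℝ E * B := by
  have h := abs_setAverage_sub_setAverage_le (ball_subset_ball (by linarith : r ≤ 2 * r))
    (measure_ball_pos μ x hr).ne' measure_ball_lt_top.ne (hf.integrableOn_ball x (2 * r))
  have hω : 0 < μ.real (ball (0 : E) 1) :=
    ENNReal.toReal_pos (measure_ball_pos μ 0 one_pos).ne' measure_ball_lt_top.ne
  rw [addHaar_real_ball_of_pos μ x (by positivity), addHaar_real_ball_of_pos μ x hr, mul_pow,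
    mul_assoc, mul_div_cancel_right₀ _ (by positivity)] at h
  exact h.trans (by gcongr)

theorem abs_setAverage_ball_sub_setAverage_ball_two_pow_mul_le (hf : LocallyIntegrable f μ)
    {B : ℝ} (hB : ∀ (z : E) (r : ℝ), 0 < r →
      ⨍ y in ball z r, |f y - ⨍ w in ball z r, f w ∂μ| ∂μ ≤ B)
    (x : E) {r : ℝ} (hr : 0 < r) (N : ℕ) :
    |(⨍ y in ball x r, f y ∂μ) - ⨍ y in ball x (2 ^ N * r), f y ∂μ|
      ≤ N * (2 ^ finrank ℝ E * B) := by
  have htel := dist_le_range_sum_dist (fun k => ⨍ y in ball x (2 ^ k * r), f y ∂μ) N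
  have hstep : ∀ k ∈ Finset.range N, dist (⨍ y in ball x (2 ^ k * r), f y ∂μ)
      (⨍ y in ball x (2 ^ (k + 1) * r), f y ∂μ) ≤ 2 ^ finrank ℝ E * B := fun k _ => by
    rw [Real.dist_eq, pow_succ', mul_assoc]
    exact abs_setAverage_ball_sub_setAverage_ball_two_mul_le μ hf x (by positivity)
      (hB x _ (by positivity))
  simpa [← Real.dist_eq] using htel.trans (Finset.sum_le_card_nsmul _ _ _ hstep)

theorem abs_le_of_holder_of_bmo [Nontrivial E] {H η B α K : ℝ} (hη : 0 < η) (hα : 0 ≤ α)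
    (hf : ∀ x y, |f x - f y| ≤ H * ‖x - y‖ ^ η)
    (hB : ∀ (z : E) (r : ℝ), 0 < r →
      ⨍ y in ball z r, |f y - ⨍ w in ball z r, f w ∂μ| ∂μ ≤ B) (x : E)
    (hInt : Integrable (fun y => |f y| / (‖x - y‖ + 1) ^ α) μ)
    (hK : ∫ y, |f y| / (‖x - y‖ + 1) ^ α ∂μ ≤ K) {r : ℝ} (hr : 0 < r) (N : ℕ) :
    |f x| ≤ H * r ^ η + N * (2 ^ finrank ℝ E * B)
      + (2 ^ N * r + 1) ^ α * K / ((2 ^ N * r) ^ finrank ℝ E * μ.real (ball 0 1)) := by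
  have hR : 0 < 2 ^ N * r := by positivity
  have hlocal := (continuous_of_abs_sub_le_mul_norm_rpow hη hf).locallyIntegrable (μ := μ)
  have htail := abs_setAverage_ball_le_of_weighted_integral_le μ hα x hInt hK hR.le
  rw [addHaar_real_ball_of_pos μ x hR] at htail
  calc |f x| = |(f x - ⨍ y in ball x r, f y ∂μ)
        + ((⨍ y in ball x r, f y ∂μ) - ⨍ y in ball x (2 ^ N * r), f y ∂μ)
        + ⨍ y in ball x (2 ^ N * r), f y ∂μ| := by ring_nf
    _ ≤ _ := abs_add_three _ _ _
    _ ≤ _ := add_le_add_three (abs_sub_setAverage_ball_le_of_holder μ hη hf x hr)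
        (abs_setAverage_ball_sub_setAverage_ball_two_pow_mul_le μ hlocal hB x hr N) htail

theorem abs_le_of_holder_of_bmo_of_le_exp [Nontrivial E] {H η B α K L : ℝ} (hη : 0 < η)
    (hα : α ∈ Set.Ioo (0 : ℝ) (finrank ℝ E : ℝ)) (hf : ∀ x y, |f x - f y| ≤ H * ‖x - y‖ ^ η)
    (hB : ∀ (z : E) (r : ℝ), 0 < r →
      ⨍ y in ball z r, |f y - ⨍ w in ball z r, f w ∂μ| ∂μ ≤ B) (x : E)
    (hInt : Integrable (fun y => |f y| / (‖x - y‖ + 1) ^ α) μ)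
    (hK : ∫ y, |f y| / (‖x - y‖ + 1) ^ α ∂μ ≤ K) (hL : 0 ≤ L) (hexp : K + H ≤ exp L) :
    |f x| ≤ 1 + ((η * log 2)⁻¹ + (((finrank ℝ E : ℝ) - α) * log 2)⁻¹ + 2) * (1 + L)
        * (2 ^ finrank ℝ E * B) + 2 ^ α / μ.real (ball (0 : E) 1) := by
  have hω : 0 < μ.real (ball (0 : E) 1) :=
    ENNReal.toReal_pos (measure_ball_pos μ 0 one_pos).ne' measure_ball_lt_top.ne
  have hH0 : 0 ≤ H := nonneg_of_abs_sub_le_mul_norm_rpow hf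
  have hK0 : 0 ≤ K := (integral_nonneg fun _ => by positivity).trans hK
  have hB0 : 0 ≤ B := (integral_nonneg fun _ => abs_nonneg _).trans (hB x 1 one_pos)
  obtain ⟨m, hm, hm'⟩ := exists_nat_exp_le_two_pow_rpow hη hL
  obtain ⟨M, hM, hM'⟩ := exists_nat_exp_le_two_pow_rpow (sub_pos.2 hα.2) hL
  have hpoint := abs_le_of_holder_of_bmo μ hη hα.1.le hf hB x hInt hK
    (r := (2 ^ m)⁻¹) (by positivity) (m + M)
  rw [show (2 : ℝ) ^ (m + M) * (2 ^ m)⁻¹ = 2 ^ M by rw [pow_add]; field_simp] at hpoint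
  have hholder : H * ((2 ^ m)⁻¹) ^ η ≤ 1 := by
    rw [inv_rpow (by positivity), ← div_eq_mul_inv, div_le_one (by positivity)]
    linarith
  have htail := add_one_rpow_mul_div_le (one_le_pow₀ one_le_two) hα.1.le hK0
    (by linarith : K ≤ ((2 : ℝ) ^ M) ^ ((finrank ℝ E : ℝ) - α)) hω
  have hsteps : (m + M : ℝ) ≤ ((η * log 2)⁻¹ + (((finrank ℝ E : ℝ) - α) * log 2)⁻¹ + 2)
      * (1 + L) := by
    rw [div_eq_inv_mul] at hm' hM'
    nlinarith [inv_nonneg.2 (mul_pos hη (log_pos one_lt_two)).le,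
      inv_nonneg.2 (mul_pos (sub_pos.2 hα.2) (log_pos one_lt_two)).le]
  push_cast at hpoint
  nlinarith [mul_le_mul_of_nonneg_right hsteps (by positivity : 0 ≤ 2 ^ finrank ℝ E * B)]

theorem exists_abs_le_mul_bmo_log {η α : ℝ} (hη : 0 < η)
    (hα : α ∈ Set.Ioo (0 : ℝ) (finrank ℝ E : ℝ)) :
    ∃ C : ℝ, 0 < C ∧
      ∀ (f : E → ℝ) (H B K : ℝ),
        (∀ x y, |f x - f y| ≤ H * ‖x - y‖ ^ η) →
        (∀ (z : E) (r : ℝ), 0 < r →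
          ⨍ x in ball z r, |f x - ⨍ y in ball z r, f y ∂μ| ∂μ ≤ B) →
        (∀ z : E, Integrable (fun y => |f y| / (‖z - y‖ + 1) ^ α) μ) →
        (∀ z : E, ∫ y, |f y| / (‖z - y‖ + 1) ^ α ∂μ ≤ K) →
        ∀ x, |f x| ≤ C + C * B * (1 + max (log (K + H)) 0) := by
  have : Nontrivial E := Module.nontrivial_of_finrank_pos (by exact_mod_cast hα.1.trans hα.2)
  have hdα : 0 < (finrank ℝ E : ℝ) - α := sub_pos.2 hα.2
  set c := (η * log 2)⁻¹ + (((finrank ℝ E : ℝ) - α) * log 2)⁻¹ + 2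
  set a := 2 ^ α / μ.real (ball (0 : E) 1)
  have hc : 0 ≤ c := by positivity
  have ha : 0 ≤ a := by positivity
  refine ⟨1 + a + 2 ^ finrank ℝ E * c, by positivity, fun f H B K hf hB hInt hK x => ?_⟩
  set L := max (log (K + H)) 0
  have hL : 0 ≤ L := le_max_right _ _
  have hB0 : 0 ≤ B := (integral_nonneg fun _ => abs_nonneg _).trans (hB x 1 one_pos)
  have hbound := abs_le_of_holder_of_bmo_of_le_exp μ hη hα hf hB x (hInt x) (hK x) hL
    (le_exp_max_log_zero _)
  nlinarith [mul_nonneg (by positivity : 0 ≤ 1 + a) (mul_nonneg hB0 (by linarith : 0 ≤ 1 + L)),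
    (by positivity : (0 : ℝ) ≤ 2 ^ finrank ℝ E * c)]

end AddHaar

theorem BGW_BMO_general (n : ℕ) (η α : ℝ) (hη : η ∈ Set.Ioo (0 : ℝ) 1)
    (hα : α ∈ Set.Ioo (0 : ℝ) (n : ℝ)) :
    ∃ C : ℝ, 0 < C ∧
      ∀ (f : EuclideanSpace ℝ (Fin n) → ℝ) (Hη B K : ℝ),
        (∀ x y, |f x - f y| ≤ Hη * ‖x - y‖ ^ η) →
        (∀ (z : EuclideanSpace ℝ (Fin n)) (r : ℝ), 0 < r →
          ⨍ x in ball z r, |f x - ⨍ y in ball z r, f y ∂volume| ∂volume ≤ B) →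
        (∀ z : EuclideanSpace ℝ (Fin n),
          Integrable (fun y => |f y| / (‖z - y‖ + 1) ^ α)) →
        (∀ z : EuclideanSpace ℝ (Fin n),
          ∫ y, |f y| / (‖z - y‖ + 1) ^ α ∂volume ≤ K) →
        ∀ x, |f x| ≤ C + C * B * (1 + max (Real.log (K + Hη)) 0) :=
  exists_abs_le_mul_bmo_log volume hη.1 (by rwa [finrank_euclideanSpace_fin])

/-- Brezis–Gallouet–Wainger type inequality with the BMO seminorm:
`‖f‖_∞ ≤ C + C‖f‖_BMO (1 + log⁺[sup_z ∫ |f(y)|/(|z-y|+1)^α dy + ‖f‖_{Ċ^η}])`. -/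
theorem BGW_BMO (n : ℕ) (hn : 1 ≤ n) (η α : ℝ) (hη : η ∈ Set.Ioo (0 : ℝ) 1)
    (hα : α ∈ Set.Ioo (0 : ℝ) (n : ℝ)) :
    ∃ C : ℝ, 0 < C ∧
      ∀ (f : EuclideanSpace ℝ (Fin n) → ℝ) (Hη B K : ℝ),
        (∀ x y, |f x - f y| ≤ Hη * ‖x - y‖ ^ η) →
        (∀ (z : EuclideanSpace ℝ (Fin n)) (r : ℝ), 0 < r →
          ⨍ x in ball z r, |f x - ⨍ y in ball z r, f y ∂volume| ∂volume ≤ B) →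
        (∀ z : EuclideanSpace ℝ (Fin n),
          Integrable (fun y => |f y| / (‖z - y‖ + 1) ^ α)) →
        (∀ z : EuclideanSpace ℝ (Fin n),
          ∫ y, |f y| / (‖z - y‖ + 1) ^ α ∂volume ≤ K) →
        ∀ x, |f x| ≤ C + C * B * (1 + max (Real.log (K + Hη)) 0) :=
  BGW_BMO_general n η α hη hα
end
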